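/- arXiv:2507.18183 — 7 statements merged into one kernel-verified Lean document; each statement's English description precedes it below -/
import Mathlib

section
/- Let E be a real normed vector space, p* ∈ E, and let p : ℕ → E be a sequence with ‖p t − p*‖ → 0 as t → ∞. Let m : ℕ → E satisfy, for every integer t ≥ 5, the sliding update m t = ((t−3)/(t+1)) • m (t−1) + (4/(t+1)) • p t. Then ‖m t − p*‖ → 0 as t → ∞. (Theorem 1, Memory Convergence, for the immediate memory unit.) -/
/-!
With the weight `W t = (t + 1) t (t - 1) (t - 2)` one has `W t (t - 3)/(t + 1) = W (t - 1)` and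
`4 W t / (t + 1) = W t - W (t - 1)`, so the update reads
`W t • (m t - p*) = W (t - 1) • (m (t - 1) - p*) + (W t - W (t - 1)) • (p t - p*)`.
Thus `m t - p*` is a `W`-weighted running average of the errors `p s - p*`, plus the initial error
damped by `W N / W t`; since `W` increases to infinity, a Stolz–Cesàro estimate gives convergence.
-/

open Filter Topology

theorem mul_le_mul_add_sub_mul_of_succ_le {S u : ℕ → ℝ} {N : ℕ} {ε : ℝ}
    (h : ∀ n ≥ N, S (n + 1) * u (n + 1) ≤ S n * u n + (S (n + 1) - S n) * ε) :
    ∀ n ≥ N, S n * u n ≤ S N * u N + (S n - S N) * ε := by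
  refine Nat.le_induction (by simp) fun n hn ih => ?_
  linarith [h n hn]

theorem tendsto_zero_of_mul_succ_le {S u b : ℕ → ℝ} (hS : Monotone S)
    (hS_top : Tendsto S atTop atTop) (hu : 0 ≤ u) (hb : Tendsto b atTop (𝓝 0))
    (hrec : ∀ᶠ n in atTop, S (n + 1) * u (n + 1) ≤ S n * u n + (S (n + 1) - S n) * b (n + 1)) :
    Tendsto u atTop (𝓝 0) := by
  refine tendsto_order.2 ⟨fun a ha => .of_forall fun n => ha.trans_le (hu n), fun ε hε => ?_⟩
  obtain ⟨N, hN⟩ := eventually_atTop.1 <| hrec.and <|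
    (hb.eventually (ge_mem_nhds (half_pos hε))).and (hS_top.eventually_gt_atTop 0)
  have hstep : ∀ n ≥ N, S (n + 1) * u (n + 1) ≤ S n * u n + (S (n + 1) - S n) * (ε / 2) :=
    fun n hn => (hN n hn).1.trans <| by
      gcongr
      · exact sub_nonneg.2 (hS n.le_succ)
      · exact (hN (n + 1) (by omega)).2.1
  have hSN := (hN N le_rfl).2.2
  filter_upwards [(tendsto_const_nhds (x := S N * u N)).div_atTop hS_top |>.eventually
    (gt_mem_nhds (half_pos hε)), eventually_ge_atTop N] with n hsmall hn
  have hSn : 0 < S n := hSN.trans_le (hS hn)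
  have hbound : u n ≤ S N * u N / S n + ε / 2 := by
    rw [div_add' _ _ _ hSn.ne', le_div_iff₀ hSn]
    nlinarith [mul_le_mul_add_sub_mul_of_succ_le hstep n hn, hu N]
  linarith

theorem tendsto_zero_of_smul_succ_eq {E : Type*} [NormedAddCommGroup E] [NormedSpace ℝ E]
    {S : ℕ → ℝ} {x y : ℕ → E} (hS : Monotone S) (hS_top : Tendsto S atTop atTop)
    (hy : Tendsto y atTop (𝓝 0))
    (hrec : ∀ᶠ n in atTop, S (n + 1) • x (n + 1) = S n • x n + (S (n + 1) - S n) • y (n + 1)) :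
    Tendsto x atTop (𝓝 0) := by
  rw [tendsto_zero_iff_norm_tendsto_zero] at hy ⊢
  have hS_nonneg : ∀ᶠ n in atTop, 0 ≤ S n := hS_top.eventually_ge_atTop 0
  refine tendsto_zero_of_mul_succ_le hS hS_top (fun n => norm_nonneg (x n)) hy ?_
  filter_upwards [hrec, hS_nonneg] with n hn hSn
  have hSn1 : 0 ≤ S (n + 1) := hSn.trans (hS n.le_succ)
  have hdiff : 0 ≤ S (n + 1) - S n := sub_nonneg.2 (hS n.le_succ)
  calc S (n + 1) * ‖x (n + 1)‖ = ‖S (n + 1) • x (n + 1)‖ := by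
        rw [norm_smul, Real.norm_of_nonneg hSn1]
    _ ≤ ‖S n • x n‖ + ‖(S (n + 1) - S n) • y (n + 1)‖ := hn ▸ norm_add_le _ _
    _ = S n * ‖x n‖ + (S (n + 1) - S n) * ‖y (n + 1)‖ := by
        rw [norm_smul, norm_smul, Real.norm_of_nonneg hSn, Real.norm_of_nonneg hdiff]

def memoryWeight (t : ℕ) : ℝ := ((t : ℝ) + 1) * t * (t - 1) * (t - 2)

theorem memoryWeight_succ_sub (n : ℕ) :
    memoryWeight (n + 1) - memoryWeight n = 4 * ((n : ℝ) + 1) * n * (n - 1) := by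
  simp only [memoryWeight]; push_cast; ring

theorem monotone_memoryWeight : Monotone memoryWeight := by
  refine monotone_nat_of_le_succ fun n => sub_nonneg.1 ?_
  rw [memoryWeight_succ_sub]
  rcases n with _ | n
  · simp
  · push_cast
    ring_nf
    positivity

theorem tendsto_memoryWeight_atTop : Tendsto memoryWeight atTop atTop := by
  refine tendsto_atTop_mono' _ ?_ tendsto_natCast_atTop_atTop
  filter_upwards [eventually_ge_atTop 3] with n hn
  have hn : (3 : ℝ) ≤ n := by exact_mod_cast hn
  have h1 : 1 ≤ ((n : ℝ) + 1) * (n - 1) * (n - 2) :=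
    one_le_mul_of_one_le_of_one_le (one_le_mul_of_one_le_of_one_le (by linarith) (by linarith))
      (by linarith)
  calc (n : ℝ) = n * 1 := (mul_one _).symm
    _ ≤ n * (((n : ℝ) + 1) * (n - 1) * (n - 2)) := by gcongr
    _ = memoryWeight n := by simp only [memoryWeight]; ring

theorem memoryWeight_smul_update_sub {E : Type*} [NormedAddCommGroup E] [NormedSpace ℝ E]
    (pstar a q : E) (n : ℕ) :
    memoryWeight (n + 1) • (((((n + 1 : ℕ) : ℝ) - 3) / (((n + 1 : ℕ) : ℝ) + 1)) • a
        + ((4 : ℝ) / (((n + 1 : ℕ) : ℝ) + 1)) • q - pstar)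
      = memoryWeight n • (a - pstar) + (memoryWeight (n + 1) - memoryWeight n) • (q - pstar) := by
  have hpos : ((n : ℝ) + 1 + 1) ≠ 0 := by positivity
  simp only [memoryWeight]
  push_cast
  match_scalars <;> field_simp <;> ring

/-- Theorem 1 (Memory Convergence, immediate memory unit): if the predictions
`p t` converge to `p*` in norm, then the memory sequence `m` defined by the
sliding update `m t = ((t−3)/(t+1)) • m (t−1) + (4/(t+1)) • p t` for `t ≥ 5`
also converges to `p*` in norm. -/
theorem immediate_memory_convergence
    {E : Type*} [NormedAddCommGroup E] [NormedSpace ℝ E]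
    (pstar : E) (p m : ℕ → E)
    (hp : Filter.Tendsto (fun t : ℕ => ‖p t - pstar‖) Filter.atTop (nhds 0))
    (hm : ∀ t : ℕ, 5 ≤ t →
      m t = ((((t : ℝ) - 3) / ((t : ℝ) + 1)) • m (t - 1)
        + ((4 : ℝ) / ((t : ℝ) + 1)) • p t)) :
    Filter.Tendsto (fun t : ℕ => ‖m t - pstar‖) Filter.atTop (nhds 0) := by
  have hp' : Tendsto (fun t => p t - pstar) atTop (𝓝 0) := tendsto_zero_iff_norm_tendsto_zero.2 hp
  refine tendsto_zero_iff_norm_tendsto_zero.1 <|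
    tendsto_zero_of_smul_succ_eq monotone_memoryWeight tendsto_memoryWeight_atTop hp' ?_
  filter_upwards [eventually_ge_atTop 4] with n hn
  rw [hm (n + 1) (by omega), Nat.add_sub_cancel]
  exact memoryWeight_smul_update_sub pstar (m n) (p (n + 1)) n
end

section
/- Let E be a real normed vector space, p* ∈ E, and let p : ℕ → E satisfy ‖p t − p*‖ → 0 as t → ∞. Let m1, m2, m3, m4 : ℕ → E satisfy, for every integer t ≥ 5: m1 t = (t/(t+1)) • m1(t−1) + (1/(t+1)) • m2(t−1), m2 t = ((t−1)/(t+1)) • m2(t−1) + (2/(t+1)) • m3(t−1), m3 t = ((t−2)/(t+1)) • m3(t−1) + (3/(t+1)) • m4(t−1), m4 t = ((t−3)/(t+1)) • m4(t−1) + (4/(t+1)) • p t, with arbitrary initial values m1 4, m2 4, m3 4, m4 4. Then for each j ∈ {1,2,3,4}, ‖mj t − p*‖ → 0 as t → ∞. (Theorem 1, Memory Convergence, full four-stage cascade.) -/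
open Filter Finset Asymptotics Topology

/-- Key single-stage lemma: the recursion `x t = ((t-k)/(t+1)) • x (t-1) + ((k+1)/(t+1)) • y t`
propagates convergence from `y` to `x`. -/
lemma one_stage_memory_convergence
    {E : Type*} [NormedAddCommGroup E] [NormedSpace ℝ E]
    (pstar : E) (k : ℕ) (hk : k ≤ 3) (x y : ℕ → E)
    (hy : Tendsto (fun t : ℕ => ‖y t - pstar‖) atTop (nhds 0))
    (hx : ∀ t : ℕ, 5 ≤ t →
      x t = (((t : ℝ) - k) / ((t : ℝ) + 1)) • x (t - 1)
        + (((k : ℝ) + 1) / ((t : ℝ) + 1)) • y t) :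
    Tendsto (fun t : ℕ => ‖x t - pstar‖) atTop (nhds 0) := by
  set δ : ℕ → E := fun t => y t - pstar with hδdef
  set ε : ℕ → E := fun t => x t - pstar with hεdef
  have hδ0 : Tendsto δ atTop (𝓝 0) := by
    rwa [tendsto_zero_iff_norm_tendsto_zero]
  -- key recursion with binomial weights
  have hrec : ∀ t : ℕ, 5 ≤ t →
      ((t + 1).choose (k + 1) : ℝ) • ε t
        = ((t.choose (k + 1) : ℝ)) • ε (t - 1) + ((t.choose k : ℝ)) • δ t := by
    intro t ht
    have ht1 : ((t : ℝ) + 1) ≠ 0 := by positivity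
    have hkt : k ≤ t := by omega
    have hP : ((t + 1).choose (k + 1) : ℝ) = (t.choose k : ℝ) + (t.choose (k + 1) : ℝ) := by
      exact_mod_cast congrArg (Nat.cast (R := ℝ)) (Nat.choose_succ_succ' t k)
    have hM : ((t : ℝ) + 1) * (t.choose k : ℝ) = ((t + 1).choose (k + 1) : ℝ) * ((k : ℝ) + 1) := by
      exact_mod_cast congrArg (Nat.cast (R := ℝ)) (Nat.add_one_mul_choose_eq t k)
    have hR : (t.choose (k + 1) : ℝ) * ((k : ℝ) + 1)
        = (t.choose k : ℝ) * ((t : ℝ) - k) := by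
      have := Nat.choose_succ_right_eq t k
      have h' : (t.choose (k + 1) : ℝ) * ((k : ℝ) + 1)
          = (t.choose k : ℝ) * (((t - k : ℕ) : ℝ)) := by exact_mod_cast this
      rwa [Nat.cast_sub hkt] at h'
    have cB : ((t + 1).choose (k + 1) : ℝ) * (((k : ℝ) + 1) / ((t : ℝ) + 1))
        = (t.choose k : ℝ) := by
      rw [← mul_div_assoc, div_eq_iff ht1]
      linear_combination -hM
    have cA : ((t + 1).choose (k + 1) : ℝ) * (((t : ℝ) - k) / ((t : ℝ) + 1))
        = (t.choose (k + 1) : ℝ) := by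
      rw [← mul_div_assoc, div_eq_iff ht1]
      linear_combination ((t : ℝ) - (k : ℝ)) * hP - hR
    have hxt := hx t ht
    simp only [hεdef, hδdef]
    rw [hxt, smul_sub, smul_add, smul_smul, smul_smul, cA, cB, hP, add_smul]
    module
  -- closed form
  set f : ℕ → E := fun t => ((t + 1).choose (k + 1) : ℝ) • ε t with hfdef
  have hclosed : ∀ t : ℕ, 4 ≤ t →
      f t = f 4 + ∑ s ∈ Finset.Ico 5 (t + 1), ((s.choose k : ℝ)) • δ s := by
    intro t ht
    induction t, ht using Nat.le_induction with
    | base => simp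
    | succ t ht ih =>
      have h5 : 5 ≤ t + 1 := by omega
      have := hrec (t + 1) h5
      simp only [Nat.add_sub_cancel] at this
      have hsum : ∑ s ∈ Finset.Ico 5 (t + 1 + 1), ((s.choose k : ℝ)) • δ s
          = (∑ s ∈ Finset.Ico 5 (t + 1), ((s.choose k : ℝ)) • δ s)
            + ((t + 1).choose k : ℝ) • δ (t + 1) :=
        Finset.sum_Ico_succ_top h5 _
      simp only [hfdef] at ih ⊢
      rw [this, ih, hsum]
      abel
  -- the truncated summand and weights
  set G : ℕ → E := fun s => if 5 ≤ s then ((s.choose k : ℝ)) • δ s else 0 with hGdef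
  set g : ℕ → ℝ := fun s => (s.choose k : ℝ) with hgdef
  have hg0 : 0 ≤ g := fun s => by positivity
  have Sid : ∀ n : ℕ, (∑ i ∈ Finset.range n, g i) = (n.choose (k + 1) : ℝ) := by
    intro n
    induction n with
    | zero => simp
    | succ n ih =>
      rw [Finset.sum_range_succ, ih]
      have : ((n + 1).choose (k + 1) : ℝ) = (n.choose k : ℝ) + (n.choose (k + 1) : ℝ) := by
        exact_mod_cast congrArg (Nat.cast (R := ℝ)) (Nat.choose_succ_succ' n k)
      rw [this]; ring
  -- divergence of the binomial weights
  have hCge : ∀ n : ℕ, ((n : ℝ) - k - 1) ≤ (n.choose (k + 1) : ℝ) := by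
    intro n
    rcases le_or_gt n k with h | h
    · have : ((n : ℝ)) ≤ (k : ℝ) := by exact_mod_cast h
      have : ((n : ℝ) - k - 1) ≤ 0 := by linarith
      exact this.trans (by positivity)
    · have hsub : Finset.Ico k n ⊆ Finset.range n := by
        intro i hi
        simp only [Finset.mem_Ico] at hi
        exact Finset.mem_range.2 hi.2
      have h1 : ∀ i ∈ Finset.Ico k n, (1 : ℝ) ≤ g i := by
        intro i hi
        simp only [Finset.mem_Ico] at hi
        have := Nat.choose_pos hi.1
        simp only [hgdef]
        exact_mod_cast this
      have : ((n - k : ℕ) : ℝ) ≤ ∑ i ∈ Finset.Ico k n, g i := by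
        calc ((n - k : ℕ) : ℝ) = ∑ _i ∈ Finset.Ico k n, (1 : ℝ) := by
              simp [Nat.card_Ico]
          _ ≤ _ := Finset.sum_le_sum h1
      have h2 : (∑ i ∈ Finset.Ico k n, g i) ≤ ∑ i ∈ Finset.range n, g i :=
        Finset.sum_le_sum_of_subset_of_nonneg hsub (fun i _ _ => hg0 i)
      have h3 : ((n - k : ℕ) : ℝ) = (n : ℝ) - k := by
        rw [Nat.cast_sub h.le]
      rw [Sid] at h2
      linarith [this.trans h2]
  have hCdiv : Tendsto (fun n : ℕ => (n.choose (k + 1) : ℝ)) atTop atTop := by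
    apply tendsto_atTop_mono hCge
    apply tendsto_atTop_add_const_right
    apply tendsto_atTop_add_const_right
    exact tendsto_natCast_atTop_atTop
  have hgdiv : Tendsto (fun n : ℕ => ∑ i ∈ Finset.range n, g i) atTop atTop := by
    simpa only [Sid] using hCdiv
  -- G is little-o of g
  have hGo : G =o[atTop] g := by
    rw [isLittleO_iff]
    intro c hc
    have hnorm : Tendsto (fun s : ℕ => ‖δ s‖) atTop (𝓝 0) := by simpa using hδ0.norm
    filter_upwards [hnorm.eventually_le_const hc, eventually_ge_atTop 5] with s hδs hs5
    simp only [hGdef, if_pos hs5, hgdef, norm_smul, Real.norm_natCast,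
      Real.norm_of_nonneg (by positivity : (0:ℝ) ≤ (s.choose k : ℝ))]
    calc (s.choose k : ℝ) * ‖δ s‖ ≤ (s.choose k : ℝ) * c := by
          apply mul_le_mul_of_nonneg_left _ (by positivity)
          exact hδs
      _ = c * (s.choose k : ℝ) := by ring
  have hsum_o : (fun n => ∑ i ∈ Finset.range n, G i)
      =o[atTop] (fun n => ∑ i ∈ Finset.range n, g i) := hGo.sum_range hg0 hgdiv
  -- weighted averages tend to zero
  have havg : Tendsto (fun n : ℕ => ((n.choose (k + 1) : ℝ))⁻¹ • ∑ i ∈ Finset.range n, G i)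
      atTop (𝓝 0) := by
    rw [← isLittleO_one_iff ℝ]
    have hbig : (fun n : ℕ => ((n.choose (k + 1) : ℝ))⁻¹)
        =O[atTop] (fun n : ℕ => ((n.choose (k + 1) : ℝ))⁻¹) := isBigO_refl _ _
    have hS : (fun n => ∑ i ∈ Finset.range n, G i)
        =o[atTop] (fun n : ℕ => (n.choose (k + 1) : ℝ)) := by
      simpa only [Sid] using hsum_o
    apply (hbig.smul_isLittleO hS).congr' (EventuallyEq.refl _ _)
    filter_upwards [eventually_ge_atTop (k + 1)] with n hn
    have : (n.choose (k + 1) : ℝ) ≠ 0 := by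
      exact_mod_cast (Nat.choose_pos hn).ne'
    simp [this]
  -- constant part tends to zero
  have hconst : Tendsto (fun t : ℕ => (((t + 1).choose (k + 1) : ℝ))⁻¹ • f 4)
      atTop (𝓝 0) := by
    have hinv : Tendsto (fun t : ℕ => (((t + 1).choose (k + 1) : ℝ))⁻¹) atTop (𝓝 0) := by
      apply Tendsto.inv_tendsto_atTop
      exact hCdiv.comp (tendsto_add_atTop_nat 1)
    simpa using hinv.smul_const (f 4)
  -- main part tends to zero
  have hmain : Tendsto
      (fun t : ℕ => (((t + 1).choose (k + 1) : ℝ))⁻¹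
        • ∑ s ∈ Finset.Ico 5 (t + 1), ((s.choose k : ℝ)) • δ s) atTop (𝓝 0) := by
    have hcomp := havg.comp (tendsto_add_atTop_nat 1)
    apply hcomp.congr'
    filter_upwards [eventually_ge_atTop 5] with t ht
    have h05 : (0:ℕ) ≤ 5 := Nat.zero_le _
    have h5t : 5 ≤ t + 1 := by omega
    have hsplit : ∑ i ∈ Finset.range (t + 1), G i
        = ∑ s ∈ Finset.Ico 5 (t + 1), ((s.choose k : ℝ)) • δ s := by
      rw [Finset.range_eq_Ico, ← Finset.sum_Ico_consecutive _ h05 h5t]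
      have hz : ∑ i ∈ Finset.Ico 0 5, G i = 0 := by
        apply Finset.sum_eq_zero
        intro i hi
        simp only [Finset.mem_Ico] at hi
        simp [hGdef, Nat.not_le.2 hi.2]
      rw [hz, zero_add]
      apply Finset.sum_congr rfl
      intro i hi
      simp only [Finset.mem_Ico] at hi
      simp [hGdef, hi.1]
    simp only [Function.comp]
    rw [hsplit]
  -- assemble
  have hε : Tendsto ε atTop (𝓝 0) := by
    have hsum : Tendsto (fun t : ℕ => (((t + 1).choose (k + 1) : ℝ))⁻¹ • f 4
        + (((t + 1).choose (k + 1) : ℝ))⁻¹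
          • ∑ s ∈ Finset.Ico 5 (t + 1), ((s.choose k : ℝ)) • δ s) atTop (𝓝 0) := by
      simpa using hconst.add hmain
    apply hsum.congr'
    filter_upwards [eventually_ge_atTop 4] with t ht
    have hC : (((t + 1).choose (k + 1) : ℕ) : ℝ) ≠ 0 := by
      exact_mod_cast (Nat.choose_pos (by omega : k + 1 ≤ t + 1)).ne'
    calc (((t + 1).choose (k + 1) : ℝ))⁻¹ • f 4
          + (((t + 1).choose (k + 1) : ℝ))⁻¹
            • ∑ s ∈ Finset.Ico 5 (t + 1), ((s.choose k : ℝ)) • δ s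
        = (((t + 1).choose (k + 1) : ℝ))⁻¹
            • (f 4 + ∑ s ∈ Finset.Ico 5 (t + 1), ((s.choose k : ℝ)) • δ s) := by
          rw [smul_add]
      _ = (((t + 1).choose (k + 1) : ℝ))⁻¹ • f t := by rw [← hclosed t ht]
      _ = ε t := by
          rw [hfdef]
          rw [smul_smul, inv_mul_cancel₀ hC, one_smul]
  rwa [← tendsto_zero_iff_norm_tendsto_zero]

/-- Theorem 1 (Memory Convergence, full four-stage cascade): if the predictions
`p t` converge to `p*` in norm, then each of the four memory units `m1, m2, m3, m4`
updated by the sliding cascade for `t ≥ 5` converges to `p*` in norm. -/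
theorem four_stage_memory_convergence
    {E : Type*} [NormedAddCommGroup E] [NormedSpace ℝ E]
    (pstar : E) (p m1 m2 m3 m4 : ℕ → E)
    (hp : Filter.Tendsto (fun t : ℕ => ‖p t - pstar‖) Filter.atTop (nhds 0))
    (h1 : ∀ t : ℕ, 5 ≤ t →
      m1 t = (((t : ℝ)) / ((t : ℝ) + 1)) • m1 (t - 1)
        + ((1 : ℝ) / ((t : ℝ) + 1)) • m2 (t - 1))
    (h2 : ∀ t : ℕ, 5 ≤ t →
      m2 t = (((t : ℝ) - 1) / ((t : ℝ) + 1)) • m2 (t - 1)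
        + ((2 : ℝ) / ((t : ℝ) + 1)) • m3 (t - 1))
    (h3 : ∀ t : ℕ, 5 ≤ t →
      m3 t = (((t : ℝ) - 2) / ((t : ℝ) + 1)) • m3 (t - 1)
        + ((3 : ℝ) / ((t : ℝ) + 1)) • m4 (t - 1))
    (h4 : ∀ t : ℕ, 5 ≤ t →
      m4 t = (((t : ℝ) - 3) / ((t : ℝ) + 1)) • m4 (t - 1)
        + ((4 : ℝ) / ((t : ℝ) + 1)) • p t) :
    Filter.Tendsto (fun t : ℕ => ‖m1 t - pstar‖) Filter.atTop (nhds 0) ∧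
    Filter.Tendsto (fun t : ℕ => ‖m2 t - pstar‖) Filter.atTop (nhds 0) ∧
    Filter.Tendsto (fun t : ℕ => ‖m3 t - pstar‖) Filter.atTop (nhds 0) ∧
    Filter.Tendsto (fun t : ℕ => ‖m4 t - pstar‖) Filter.atTop (nhds 0) := by
  have hm4 : Tendsto (fun t : ℕ => ‖m4 t - pstar‖) atTop (𝓝 0) := by
    apply one_stage_memory_convergence pstar 3 le_rfl m4 p hp
    intro t ht
    convert h4 t ht using 3 <;> push_cast <;> ring
  have hm4' : Tendsto (fun t : ℕ => ‖m4 (t - 1) - pstar‖) atTop (𝓝 0) :=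
    hm4.comp (tendsto_sub_atTop_nat 1)
  have hm3 : Tendsto (fun t : ℕ => ‖m3 t - pstar‖) atTop (𝓝 0) := by
    apply one_stage_memory_convergence pstar 2 (by norm_num) m3 (fun t => m4 (t - 1)) hm4'
    intro t ht
    convert h3 t ht using 3 <;> push_cast <;> ring
  have hm3' : Tendsto (fun t : ℕ => ‖m3 (t - 1) - pstar‖) atTop (𝓝 0) :=
    hm3.comp (tendsto_sub_atTop_nat 1)
  have hm2 : Tendsto (fun t : ℕ => ‖m2 t - pstar‖) atTop (𝓝 0) := by
    apply one_stage_memory_convergence pstar 1 (by norm_num) m2 (fun t => m3 (t - 1)) hm3'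
    intro t ht
    convert h2 t ht using 3 <;> push_cast <;> ring
  have hm2' : Tendsto (fun t : ℕ => ‖m2 (t - 1) - pstar‖) atTop (𝓝 0) :=
    hm2.comp (tendsto_sub_atTop_nat 1)
  have hm1 : Tendsto (fun t : ℕ => ‖m1 t - pstar‖) atTop (𝓝 0) := by
    apply one_stage_memory_convergence pstar 0 (by norm_num) m1 (fun t => m2 (t - 1)) hm2'
    intro t ht
    convert h1 t ht using 3 <;> push_cast <;> ring
  exact ⟨hm1, hm2, hm3, hm4⟩
end

section
/- Let E be a real normed vector space, L ∈ E, c a fixed positive integer, and x : ℕ → E a sequence with ‖x t − L‖ → 0 as t → ∞. Let m : ℕ → E satisfy, for every integer t ≥ c + 1, m t = ((t+1−c)/(t+1)) • m (t−1) + (c/(t+1)) • x t, with arbitrary initial value m c. Then ‖m t − L‖ → 0 as t → ∞. -/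
/-!
Writing `eₜ = ‖mₜ - L‖`, the recursion is a convex combination, so the triangle inequality gives
`(t + 1) eₜ ≤ (t + 1 - c) eₜ₋₁ + c ‖xₜ - L‖ ≤ t eₜ₋₁ + c ‖xₜ - L‖` once `c ≥ 1`.
Telescoping, `(t + 1) eₜ` is at most a constant plus `c` times a partial sum of `‖xₜ - L‖`,
so `eₜ` is dominated by a vanishing term plus a Cesàro mean of a null sequence.
-/

open Filter Topology Finset

lemma le_add_sum_range_of_le_pred_add {u v : ℕ → ℝ} {N : ℕ} (hv : 0 ≤ v)
    (h : ∀ t, N < t → u t ≤ u (t - 1) + v t) :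
    ∀ t, N ≤ t → u t ≤ u N + ∑ i ∈ range (t + 1), v i := by
  refine Nat.le_induction ?_ (fun t hNt ih => ?_)
  · exact le_add_of_nonneg_right (sum_nonneg fun i _ => hv i)
  · have step := h (t + 1) (Nat.lt_succ_of_le hNt)
    rw [Nat.add_sub_cancel] at step
    rw [sum_range_succ]
    linarith

lemma tendsto_zero_of_succ_mul_le_mul_pred_add {e v : ℕ → ℝ} {N : ℕ} (he : 0 ≤ e) (hv0 : 0 ≤ v)
    (hv : Tendsto v atTop (𝓝 0))
    (hrec : ∀ t, N < t → ((t : ℝ) + 1) * e t ≤ t * e (t - 1) + v t) :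
    Tendsto e atTop (𝓝 0) := by
  have hsum := le_add_sum_range_of_le_pred_add (N := N) (u := fun t => ((t : ℝ) + 1) * e t) hv0
    (fun t ht => by
      have ht1 : ((t - 1 : ℕ) : ℝ) + 1 = t := by
        rw [Nat.cast_pred (by omega)]; ring
      simpa only [ht1] using hrec t ht)
  have hbound : ∀ t, N ≤ t →
      e t ≤ ((N + 1) * e N) / ((t : ℝ) + 1) + ((t + 1 : ℕ) : ℝ)⁻¹ * ∑ i ∈ range (t + 1), v i := by
    intro t ht
    rw [Nat.cast_succ, ← div_eq_inv_mul, ← add_div, le_div_iff₀ (by positivity), mul_comm]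
    exact hsum t ht
  have hmean : Tendsto (fun t : ℕ => ((t + 1 : ℕ) : ℝ)⁻¹ * ∑ i ∈ range (t + 1), v i) atTop (𝓝 0) :=
    hv.cesaro.comp (tendsto_add_atTop_nat 1)
  have hconst : Tendsto (fun t : ℕ => ((N + 1) * e N) / ((t : ℝ) + 1)) atTop (𝓝 0) :=
    ((tendsto_const_div_atTop_nhds_zero_nat ((N + 1) * e N)).comp
      (tendsto_add_atTop_nat 1)).congr fun t => by simp
  refine tendsto_of_tendsto_of_tendsto_of_le_of_le' tendsto_const_nhds
    (by simpa only [add_zero] using hconst.add hmean) (Eventually.of_forall he) ?_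
  filter_upwards [eventually_ge_atTop N] using hbound

lemma succ_mul_norm_smul_add_smul_sub_le {E : Type*} [NormedAddCommGroup E] [NormedSpace ℝ E]
    {n c : ℝ} (hc : 1 ≤ c) (hcn : c ≤ n + 1) (y z L : E) :
    (n + 1) * ‖((n + 1 - c) / (n + 1)) • y + (c / (n + 1)) • z - L‖
      ≤ n * ‖y - L‖ + c * ‖z - L‖ := by
  have hn : 0 < n + 1 := by linarith
  have hscale : (n + 1) • (((n + 1 - c) / (n + 1)) • y + (c / (n + 1)) • z - L)
      = (n + 1 - c) • (y - L) + c • (z - L) := by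
    simp only [smul_sub, smul_add, smul_smul, mul_div_cancel₀ _ hn.ne']
    module
  calc (n + 1) * ‖((n + 1 - c) / (n + 1)) • y + (c / (n + 1)) • z - L‖
      = ‖(n + 1 - c) • (y - L) + c • (z - L)‖ := by
        rw [← hscale, norm_smul, Real.norm_of_nonneg hn.le]
    _ ≤ (n + 1 - c) * ‖y - L‖ + c * ‖z - L‖ := by
        refine (norm_add_le _ _).trans_eq ?_
        rw [norm_smul, norm_smul, Real.norm_of_nonneg (by linarith),
          Real.norm_of_nonneg (by linarith)]
    _ ≤ n * ‖y - L‖ + c * ‖z - L‖ := by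
        nlinarith [norm_nonneg (y - L)]

/-- Common analytic core of the memory convergence proofs: for a fixed positive
integer `c`, if the incoming signal `x t` converges to `L` in norm, then the
memory sequence `m` defined for `t ≥ c + 1` by
`m t = ((t+1−c)/(t+1)) • m (t−1) + (c/(t+1)) • x t` converges to `L` in norm. -/
theorem sliding_memory_convergence
    {E : Type*} [NormedAddCommGroup E] [NormedSpace ℝ E]
    (L : E) (c : ℕ) (hc : 0 < c) (x m : ℕ → E)
    (hx : Filter.Tendsto (fun t : ℕ => ‖x t - L‖) Filter.atTop (nhds 0))
    (hm : ∀ t : ℕ, c + 1 ≤ t →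
      m t = ((((t : ℝ) + 1 - (c : ℝ)) / ((t : ℝ) + 1)) • m (t - 1)
        + (((c : ℝ)) / ((t : ℝ) + 1)) • x t)) :
    Filter.Tendsto (fun t : ℕ => ‖m t - L‖) Filter.atTop (nhds 0) := by
  refine tendsto_zero_of_succ_mul_le_mul_pred_add (N := c) (v := fun t => c * ‖x t - L‖)
    (fun t => norm_nonneg _) (fun t => by positivity) (by simpa using hx.const_mul (c : ℝ))
    (fun t ht => ?_)
  have hct : (c : ℝ) ≤ t + 1 := by exact_mod_cast ht.le.trans (Nat.le_succ t)
  rw [hm t ht]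
  exact succ_mul_norm_smul_add_smul_sub_le (by exact_mod_cast hc) hct _ _ _
end

section
/- Let (a_t) and (ε_t) be sequences of nonnegative real numbers with ε_t → 0 as t → ∞, and suppose that for every integer t ≥ 5, a_t ≤ ((t−3)/(t+1)) · a_{t−1} + (4/(t+1)) · ε_t. Then a_t → 0 as t → ∞. -/
/-!
Multiplying the recursion by `w t = (t - 2)(t - 1) t (t + 1)` turns it into
`w t * a t ≤ w (t - 1) * a (t - 1) + (w t - w (t - 1)) * ε t`, because
`w t * (t - 3) / (t + 1) = w (t - 1)` and `4 * w t / (t + 1) = w t - w (t - 1)`.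
Once `ε ≤ δ`, the quantity `w t * (a t - δ)` is therefore nonincreasing, hence bounded by a
constant `C`, and `a t ≤ δ + C / w t` with `w t → ∞`.
-/

open Filter Topology

theorem mul_sub_le_of_forall_succ_le {w a : ℕ → ℝ} {δ : ℝ} {N : ℕ}
    (h : ∀ t ≥ N, w (t + 1) * a (t + 1) ≤ w t * a t + (w (t + 1) - w t) * δ) :
    ∀ t ≥ N, w t * (a t - δ) ≤ w N * (a N - δ) := by
  have hanti : AntitoneOn (fun t => w t * (a t - δ)) {t | N ≤ t} :=
    antitoneOn_nat_Ici_of_succ_le fun t ht => by linarith [h t ht]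
  exact fun t ht => hanti (le_refl N) ht ht

theorem tendsto_zero_of_mul_le_mul_add_sub_mul {w a ε : ℕ → ℝ} (hw : Monotone w)
    (hw_top : Tendsto w atTop atTop) (ha : ∀ t, 0 ≤ a t) (hε : Tendsto ε atTop (𝓝 0))
    (hrec : ∀ᶠ t in atTop, w (t + 1) * a (t + 1) ≤ w t * a t + (w (t + 1) - w t) * ε (t + 1)) :
    Tendsto a atTop (𝓝 0) := by
  refine tendsto_order.2 ⟨fun b hb => .of_forall fun t => hb.trans_le (ha t), fun δ hδ => ?_⟩
  have hε_small : ∀ᶠ t in atTop, ε (t + 1) ≤ δ / 2 :=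
    (hε.comp (tendsto_add_atTop_nat 1)).eventually (ge_mem_nhds (half_pos hδ))
  obtain ⟨N, hN⟩ := eventually_atTop.1 (hrec.and hε_small)
  have hbound := mul_sub_le_of_forall_succ_le (w := w) (a := a) (δ := δ / 2) (N := N)
    fun t ht => by
      obtain ⟨hrec_t, hε_t⟩ := hN t ht
      nlinarith [hw t.le_succ]
  filter_upwards [eventually_ge_atTop N, hw_top.eventually_gt_atTop 0,
    (hw_top.const_div_atTop (w N * (a N - δ / 2))).eventually (gt_mem_nhds (half_pos hδ))]
    with t hNt hwt hsmall
  have : a t - δ / 2 ≤ w N * (a N - δ / 2) / w t := by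
    rw [le_div_iff₀ hwt, mul_comm]
    exact hbound t hNt
  linarith

def errorWeight (t : ℕ) : ℝ := ((t : ℝ) - 2) * ((t : ℝ) - 1) * t * ((t : ℝ) + 1)

theorem errorWeight_succ_sub (t : ℕ) :
    errorWeight (t + 1) - errorWeight t = 4 * ((t : ℝ) - 1) * t * ((t : ℝ) + 1) := by
  simp only [errorWeight]; push_cast; ring

theorem errorWeight_monotone : Monotone errorWeight := by
  refine monotone_nat_of_le_succ fun t => ?_
  rw [← sub_nonneg, errorWeight_succ_sub]
  rcases t with _ | t
  · simp
  · simp only [Nat.cast_add, Nat.cast_one, add_sub_cancel_right]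
    positivity

theorem tendsto_errorWeight_atTop : Tendsto errorWeight atTop atTop := by
  refine tendsto_atTop_mono' atTop ?_ tendsto_natCast_atTop_atTop
  filter_upwards [eventually_ge_atTop 3] with t ht
  have ht' : (3 : ℝ) ≤ t := by exact_mod_cast ht
  have h : 1 ≤ ((t : ℝ) - 2) * ((t : ℝ) - 1) * ((t : ℝ) + 1) :=
    one_le_mul_of_one_le_of_one_le (one_le_mul_of_one_le_of_one_le (by linarith) (by linarith))
      (by linarith)
  calc (t : ℝ) ≤ ((t : ℝ) - 2) * ((t : ℝ) - 1) * ((t : ℝ) + 1) * t :=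
        le_mul_of_one_le_left t.cast_nonneg h
    _ = errorWeight t := by simp only [errorWeight]; ring

theorem errorWeight_nonneg (t : ℕ) : 0 ≤ errorWeight t := by
  simpa [errorWeight] using errorWeight_monotone (Nat.zero_le t)

theorem errorWeight_mul_le {a ε : ℕ → ℝ} {t : ℕ}
    (h : a (t + 1) ≤ (((t + 1 : ℕ) : ℝ) - 3) / (((t + 1 : ℕ) : ℝ) + 1) * a t
        + 4 / (((t + 1 : ℕ) : ℝ) + 1) * ε (t + 1)) :
    errorWeight (t + 1) * a (t + 1)
      ≤ errorWeight t * a t + (errorWeight (t + 1) - errorWeight t) * ε (t + 1) := by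
  calc errorWeight (t + 1) * a (t + 1)
      ≤ errorWeight (t + 1) * ((((t + 1 : ℕ) : ℝ) - 3) / (((t + 1 : ℕ) : ℝ) + 1) * a t
        + 4 / (((t + 1 : ℕ) : ℝ) + 1) * ε (t + 1)) :=
        mul_le_mul_of_nonneg_left h (errorWeight_nonneg _)
    _ = _ := by
      rw [errorWeight_succ_sub]; simp only [errorWeight]; push_cast; field_simp; ring

theorem error_recursion_tendsto_zero_general
    (a ε : ℕ → ℝ) (ha : ∀ t, 0 ≤ a t)
    (hεlim : Filter.Tendsto ε Filter.atTop (nhds 0))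
    (hrec : ∀ t : ℕ, 5 ≤ t →
      a t ≤ (((t : ℝ) - 3) / ((t : ℝ) + 1)) * a (t - 1)
        + ((4 : ℝ) / ((t : ℝ) + 1)) * ε t) :
    Filter.Tendsto a Filter.atTop (nhds 0) := by
  refine tendsto_zero_of_mul_le_mul_add_sub_mul errorWeight_monotone tendsto_errorWeight_atTop
    ha hεlim ?_
  filter_upwards [eventually_ge_atTop 4] with t ht
  exact errorWeight_mul_le (hrec (t + 1) (by omega))

/-- Recursive norm-inequality lemma: if nonnegative reals `a t` satisfy
`a t ≤ ((t−3)/(t+1)) a (t−1) + (4/(t+1)) ε t` for all `t ≥ 5` with nonnegative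
`ε t → 0`, then `a t → 0`. -/
theorem error_recursion_tendsto_zero
    (a ε : ℕ → ℝ) (ha : ∀ t, 0 ≤ a t) (hε : ∀ t, 0 ≤ ε t)
    (hεlim : Filter.Tendsto ε Filter.atTop (nhds 0))
    (hrec : ∀ t : ℕ, 5 ≤ t →
      a t ≤ (((t : ℝ) - 3) / ((t : ℝ) + 1)) * a (t - 1)
        + ((4 : ℝ) / ((t : ℝ) + 1)) * ε t) :
    Filter.Tendsto a Filter.atTop (nhds 0) :=
  error_recursion_tendsto_zero_general a ε ha hεlim hrec
end

section
/- Let E be a real normed vector space, p* ∈ E, j ∈ {1,2,3}, and let x : ℕ → E be a sequence with ‖x t − p*‖ → 0 as t → ∞. Let m : ℕ → E satisfy, for every integer t ≥ 5, m t = ((t+1−j)/(t+1)) • m(t−1) + (j/(t+1)) • x(t−1), with arbitrary initial value m 4. Then ‖m t − p*‖ → 0 as t → ∞. In particular, convergence propagates backwards through the memory cascade: if memory unit j+1 converges to p*, so does memory unit j. -/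
/-!
Writing `eₜ = ‖m t - p*‖` and `yₜ = ‖x t - p*‖`, the update is a convex combination, and since
`j ≥ 1` its weight on the old value is at most `t / (t + 1)`; hence `(t + 1) eₜ` grows by at most
`j yₜ₋₁` per step. So `eₜ` is bounded by `O(1/t)` plus a Cesàro mean of `y`, which tends to `0`.
-/

open Filter Topology Finset

theorem norm_smul_add_smul_sub_le {E : Type*} [SeminormedAddCommGroup E] [NormedSpace ℝ E]
    {a b : ℝ} (ha : 0 ≤ a) (hb : 0 ≤ b) (hab : a + b = 1) (u v p : E) :
    ‖a • u + b • v - p‖ ≤ a * ‖u - p‖ + b * ‖v - p‖ := by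
  have hsplit : a • u + b • v - p = a • (u - p) + b • (v - p) := by
    rw [smul_sub, smul_sub, sub_add_sub_comm, ← add_smul, hab, one_smul]
  calc ‖a • u + b • v - p‖ = ‖a • (u - p) + b • (v - p)‖ := by rw [hsplit]
    _ ≤ ‖a • (u - p)‖ + ‖b • (v - p)‖ := norm_add_le _ _
    _ = a * ‖u - p‖ + b * ‖v - p‖ := by
      rw [norm_smul, norm_smul, Real.norm_of_nonneg ha, Real.norm_of_nonneg hb]

theorem mul_norm_average_sub_le {E : Type*} [SeminormedAddCommGroup E] [NormedSpace ℝ E]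
    {c s : ℝ} (hc : 1 ≤ c) (hcs : c ≤ s) (u v p : E) :
    s * ‖((s - c) / s) • u + (c / s) • v - p‖ ≤ (s - 1) * ‖u - p‖ + c * ‖v - p‖ := by
  have hs : 0 < s := by linarith
  have hbound := norm_smul_add_smul_sub_le (a := (s - c) / s) (b := c / s)
    (div_nonneg (sub_nonneg.2 hcs) hs.le) (div_nonneg (by linarith) hs.le)
    (by field_simp; ring) u v p
  calc s * ‖((s - c) / s) • u + (c / s) • v - p‖
      ≤ (s - c) * ‖u - p‖ + c * ‖v - p‖ := by
        have := mul_le_mul_of_nonneg_left hbound hs.le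
        field_simp at this
        linarith
    _ ≤ (s - 1) * ‖u - p‖ + c * ‖v - p‖ := by gcongr

theorem tendsto_inv_succ_mul_sum_range {y : ℕ → ℝ} (hy : Tendsto y atTop (𝓝 0)) :
    Tendsto (fun n : ℕ => ((n : ℝ) + 1)⁻¹ * ∑ i ∈ range n, y i) atTop (𝓝 0) := by
  have hshift := hy.cesaro.comp (tendsto_add_atTop_nat 1)
  have hlast := tendsto_one_div_add_atTop_nhds_zero_nat.mul hy
  convert hshift.sub hlast using 1
  · ext n
    simp only [Function.comp_apply, sum_range_succ, Nat.cast_add, Nat.cast_one]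
    ring
  · simp

theorem tendsto_zero_of_succ_mul_le {e y : ℕ → ℝ} {N : ℕ} (he : ∀ n, 0 ≤ e n)
    (hy : Tendsto y atTop (𝓝 0))
    (hrec : ∀ n ≥ N, ((n : ℝ) + 2) * e (n + 1) ≤ (n + 1) * e n + y n) :
    Tendsto e atTop (𝓝 0) := by
  have htelescope : ∀ n ≥ N,
      ((n : ℝ) + 1) * e n ≤ ((N : ℝ) + 1) * e N + ∑ i ∈ Ico N n, y i := by
    intro n hn
    induction n, hn using Nat.le_induction with
    | base => simp
    | succ n hn ih =>
      rw [sum_Ico_succ_top hn]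
      push_cast
      linarith [hrec n hn]
  set C := ((N : ℝ) + 1) * e N - ∑ i ∈ range N, y i
  have hbound : ∀ n ≥ N,
      e n ≤ ((n : ℝ) + 1)⁻¹ * C + ((n : ℝ) + 1)⁻¹ * ∑ i ∈ range n, y i := by
    intro n hn
    have hpos : (0 : ℝ) < n + 1 := by positivity
    rw [← mul_add, le_inv_mul_iff₀ hpos]
    have := htelescope n hn
    rw [sum_Ico_eq_sub _ hn] at this
    linarith
  have hlim : Tendsto (fun n : ℕ => ((n : ℝ) + 1)⁻¹ * C + ((n : ℝ) + 1)⁻¹ * ∑ i ∈ range n, y i)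
      atTop (𝓝 0) := by
    simpa using ((tendsto_one_div_add_atTop_nhds_zero_nat.mul_const C).add
      (tendsto_inv_succ_mul_sum_range hy))
  exact tendsto_of_tendsto_of_tendsto_of_le_of_le' tendsto_const_nhds hlim
    (Eventually.of_forall he) (eventually_atTop.2 ⟨N, hbound⟩)

/-- Convergence propagates backwards through the memory cascade: for
`j ∈ {1,2,3}`, if the incoming signal `x t` (the next memory unit) converges to
`p*` in norm, then the memory unit `m` defined for `t ≥ 5` by
`m t = ((t+1−j)/(t+1)) • m (t−1) + (j/(t+1)) • x (t−1)` converges to `p*`. -/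
theorem cascade_backward_convergence
    {E : Type*} [NormedAddCommGroup E] [NormedSpace ℝ E]
    (pstar : E) (j : ℕ) (hj : j ∈ ({1, 2, 3} : Set ℕ)) (x m : ℕ → E)
    (hx : Filter.Tendsto (fun t : ℕ => ‖x t - pstar‖) Filter.atTop (nhds 0))
    (hm : ∀ t : ℕ, 5 ≤ t →
      m t = (((t : ℝ) + 1 - (j : ℝ)) / ((t : ℝ) + 1)) • m (t - 1)
        + (((j : ℝ)) / ((t : ℝ) + 1)) • x (t - 1)) :
    Filter.Tendsto (fun t : ℕ => ‖m t - pstar‖) Filter.atTop (nhds 0) := by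
  obtain ⟨hj1, hj3⟩ : 1 ≤ j ∧ j ≤ 3 := by
    simp only [Set.mem_insert_iff, Set.mem_singleton_iff] at hj
    omega
  refine tendsto_zero_of_succ_mul_le (N := 4) (fun n => norm_nonneg _)
    (by simpa using hx.const_mul (j : ℝ)) fun n hn => ?_
  have hstep := mul_norm_average_sub_le (c := j) (s := ((n + 1 : ℕ) : ℝ) + 1)
    (by exact_mod_cast hj1) (by push_cast; exact_mod_cast (by omega : j ≤ n + 2))
    (m n) (x n) pstar
  rw [hm (n + 1) (by omega), Nat.add_sub_cancel]
  push_cast at hstep ⊢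
  linarith
end

section
/- Let E be a real normed vector space, p* ∈ E, T ≥ 4 an integer, and m : ℕ → E satisfying, for every integer t > T, m t = ((t−3)/(t+1)) • m(t−1) + (4/(t+1)) • p*. Then for every t > T, ‖m t − p*‖ = ‖m T − p*‖ · ((T−2)(T−1)T(T+1)) / ((t−2)(t−1)t(t+1)). In particular ‖m t − p*‖ → 0 as t → ∞, so the effect of any perturbation present at epoch T on the immediate memory unit decays to zero. -/
/-!
With `w t = (t - 2)(t - 1) t (t + 1)` the contraction factor is `(t - 3)/(t + 1) = w (t - 1) / w t`,
and since `4/(t + 1) = 1 - (t - 3)/(t + 1)` the error `δ t = m t - p*` obeys `δ t = ((t - 3)/(t + 1)) • δ (t - 1)`.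
Hence `w t • δ t` is constant from epoch `T` on, which gives the exact formula; as `w t → ∞`, the
error tends to zero.
-/

open Filter Topology

def quarticWeight (t : ℝ) : ℝ := (t - 2) * (t - 1) * t * (t + 1)

lemma quarticWeight_pos {t : ℝ} (ht : 2 < t) : 0 < quarticWeight t := by
  unfold quarticWeight
  have : 0 < t - 2 := by linarith
  have : 0 < t - 1 := by linarith
  have : 0 < t := by linarith
  positivity

lemma quarticWeight_mul_div (t : ℝ) (ht : t + 1 ≠ 0) :
    quarticWeight t * ((t - 3) / (t + 1)) = quarticWeight (t - 1) := by
  unfold quarticWeight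
  field_simp
  ring

lemma le_quarticWeight {t : ℝ} (ht : 3 ≤ t) : t ≤ quarticWeight t := by
  unfold quarticWeight
  have h : 1 ≤ (t - 2) * (t - 1) * (t + 1) := by
    have : (1 : ℝ) ≤ (t - 2) * (t - 1) := by nlinarith
    nlinarith
  nlinarith

lemma tendsto_quarticWeight_atTop : Tendsto quarticWeight atTop atTop :=
  tendsto_atTop_mono' atTop (eventually_ge_atTop 3 |>.mono fun _ ↦ le_quarticWeight) tendsto_id

section

variable {E : Type*} [NormedAddCommGroup E] [NormedSpace ℝ E]

lemma sub_eq_smul_sub_of_eq_smul_add_smul {c d : ℝ} (hcd : c + d = 1) {x y p : E}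
    (h : x = c • y + d • p) : x - p = c • (y - p) := by
  rw [h, eq_sub_of_add_eq' hcd, smul_sub, sub_smul, one_smul]
  abel

lemma norm_eq_mul_div_of_smul_eq_smul {a b : ℝ} (ha : 0 < a) (hb : 0 ≤ b) {x y : E}
    (h : a • x = b • y) : ‖x‖ = ‖y‖ * (b / a) := by
  have := congrArg norm h
  rw [norm_smul, norm_smul, Real.norm_of_nonneg ha.le, Real.norm_of_nonneg hb] at this
  field_simp
  linarith

lemma quarticWeight_smul_sub_eq {m : ℕ → E} {p : E} {T : ℕ}
    (hm : ∀ t : ℕ, T < t →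
      m t = (((t : ℝ) - 3) / ((t : ℝ) + 1)) • m (t - 1) + ((4 : ℝ) / ((t : ℝ) + 1)) • p)
    {t : ℕ} (ht : T ≤ t) :
    quarticWeight t • (m t - p) = quarticWeight T • (m T - p) := by
  induction t, ht using Nat.le_induction with
  | base => rfl
  | succ n hn ih =>
    have hpos : ((n + 1 : ℕ) : ℝ) + 1 ≠ 0 := by positivity
    have hsum : ((n + 1 : ℕ) - 3 : ℝ) / ((n + 1 : ℕ) + 1) + 4 / ((n + 1 : ℕ) + 1) = 1 := by
      field_simp
      ring
    have hstep := sub_eq_smul_sub_of_eq_smul_add_smul hsum (hm (n + 1) (by omega))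
    rw [hstep, smul_smul, quarticWeight_mul_div _ hpos, ← ih, Nat.add_sub_cancel]
    push_cast
    ring_nf

end

/-- Decay of a perturbation present at epoch `T`: if predictions equal the
steady state `p*` for all `t > T`, then the immediate-memory error norm
satisfies the exact decay formula
`‖m t − p*‖ = ‖m T − p*‖ · ((T−2)(T−1)T(T+1)) / ((t−2)(t−1)t(t+1))` for all
`t > T`, and in particular `‖m t − p*‖ → 0`. -/
theorem perturbation_decay
    {E : Type*} [NormedAddCommGroup E] [NormedSpace ℝ E]
    (pstar : E) (T : ℕ) (hT : 4 ≤ T) (m : ℕ → E)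
    (hm : ∀ t : ℕ, T < t →
      m t = (((t : ℝ) - 3) / ((t : ℝ) + 1)) • m (t - 1)
        + ((4 : ℝ) / ((t : ℝ) + 1)) • pstar) :
    (∀ t : ℕ, T < t →
      ‖m t - pstar‖ = ‖m T - pstar‖
        * ((((T : ℝ) - 2) * ((T : ℝ) - 1) * (T : ℝ) * ((T : ℝ) + 1))
          / (((t : ℝ) - 2) * ((t : ℝ) - 1) * (t : ℝ) * ((t : ℝ) + 1))))
    ∧ Filter.Tendsto (fun t : ℕ => ‖m t - pstar‖) Filter.atTop (nhds 0) := by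
  have hT' : (4 : ℝ) ≤ T := by exact_mod_cast hT
  have formula (t : ℕ) (ht : T < t) :
      ‖m t - pstar‖ = ‖m T - pstar‖ * (quarticWeight T / quarticWeight t) := by
    have ht' : (T : ℝ) < t := by exact_mod_cast ht
    exact norm_eq_mul_div_of_smul_eq_smul (quarticWeight_pos (by linarith))
      (quarticWeight_pos (by linarith)).le (quarticWeight_smul_sub_eq hm ht.le)
  refine ⟨formula, ?_⟩
  have hlim : Tendsto (fun t : ℕ ↦ ‖m T - pstar‖ * (quarticWeight T / quarticWeight t))
      atTop (𝓝 0) := by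
    simpa [div_eq_mul_inv, mul_assoc] using
      ((tendsto_quarticWeight_atTop.comp tendsto_natCast_atTop_atTop).inv_tendsto_atTop).const_mul
        (‖m T - pstar‖ * quarticWeight T)
  exact hlim.congr' (eventually_gt_atTop T |>.mono fun t ht ↦ (formula t ht).symm)
end

section
/- Let E be a real vector space, p : ℕ → E, and m : ℕ → E satisfying, for every integer t ≥ 5, m t = ((t−3)/(t+1)) • m(t−1) + (4/(t+1)) • p t. Then for every integer t ≥ 5 the recursion has the closed-form solution m t = (120 / ((t−2)(t−1)t(t+1))) • m 4 + ∑_{k=5}^{t} (4(k−2)(k−1)k / ((t−2)(t−1)t(t+1))) • p k. Moreover the coefficients are nonnegative and sum to 1, so m t is a convex combination of m 4 and the predictions p 5, …, p t in which more recent predictions receive larger weight. -/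
/-!
Multiplying the recursion by `D t = (t-2)(t-1)t(t+1)` turns it into
`D t • m t = D (t-1) • m (t-1) + w t • p t` with `w k = 4(k-2)(k-1)k = D k - D (k-1)`,
because `D t · (t-3)/(t+1) = D (t-1)`. Both `D t • m t` and `D t` therefore telescope, and
`D 4 = 120`. Dividing by `D t > 0` gives the closed form, and the weights sum to `1`. The weights
are monotone since `w (k+1) - w k = 12 k (k-1) ≥ 0`.
-/

open Finset

theorem eq_add_sum_Icc_of_forall_eq_add {M : Type*} [AddCommMonoid M] {f g : ℕ → M} {n : ℕ}
    (h : ∀ t, n < t → f t = f (t - 1) + g t) :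
    ∀ t, n ≤ t → f t = f n + ∑ k ∈ Icc (n + 1) t, g k := by
  intro t ht
  induction t, ht using Nat.le_induction with
  | base => simp
  | succ t ht ih =>
    rw [h (t + 1) (by omega), Nat.add_sub_cancel, ih, sum_Icc_succ_top (by omega), add_assoc]

namespace ImmediateMemory

def normalizer (t : ℕ) : ℝ := ((t : ℝ) - 2) * ((t : ℝ) - 1) * (t : ℝ) * ((t : ℝ) + 1)

def weight (k : ℕ) : ℝ := 4 * ((k : ℝ) - 2) * ((k : ℝ) - 1) * (k : ℝ)

theorem normalizer_four : normalizer 4 = 120 := by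
  norm_num [normalizer]

theorem normalizer_pos {t : ℕ} (ht : 3 ≤ t) : 0 < normalizer t := by
  have : (3 : ℝ) ≤ t := by exact_mod_cast ht
  unfold normalizer
  exact mul_pos (mul_pos (mul_pos (by linarith) (by linarith)) (by linarith)) (by linarith)

theorem normalizer_eq_add_weight {t : ℕ} (ht : 1 ≤ t) :
    normalizer t = normalizer (t - 1) + weight t := by
  simp only [normalizer, weight, Nat.cast_sub ht]
  ring

theorem normalizer_mul_div {t : ℕ} (ht : 1 ≤ t) :
    normalizer t * (((t : ℝ) - 3) / ((t : ℝ) + 1)) = normalizer (t - 1) := by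
  simp only [normalizer, Nat.cast_sub ht]
  field_simp
  ring

theorem normalizer_mul_four_div (t : ℕ) :
    normalizer t * ((4 : ℝ) / ((t : ℝ) + 1)) = weight t := by
  simp only [normalizer, weight]
  field_simp

theorem monotone_weight : Monotone weight := by
  refine monotone_nat_of_le_succ fun k => ?_
  have step : weight (k + 1) - weight k = 12 * ((k : ℝ) * ((k : ℝ) - 1)) := by
    simp only [weight]
    push_cast
    ring
  have : 0 ≤ (k : ℝ) * ((k : ℝ) - 1) := by
    rcases k with _ | k
    · simp
    · push_cast
      rw [add_sub_cancel_right]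
      positivity
  linarith

theorem weight_nonneg (k : ℕ) : 0 ≤ weight k :=
  (show (0 : ℝ) = weight 0 by simp [weight]).trans_le (monotone_weight k.zero_le)

theorem sum_weight_Icc {t : ℕ} (ht : 4 ≤ t) :
    ∑ k ∈ Icc 5 t, weight k = normalizer t - 120 := by
  rw [eq_add_sum_Icc_of_forall_eq_add (f := normalizer) (g := weight) (n := 4)
    (fun t ht => normalizer_eq_add_weight (by omega)) t ht, normalizer_four]
  ring

theorem div_normalizer_add_sum_weight_div {t : ℕ} (ht : 4 ≤ t) :
    120 / normalizer t + ∑ k ∈ Icc 5 t, weight k / normalizer t = 1 := by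
  rw [← sum_div, sum_weight_Icc ht, ← add_div, add_sub_cancel,
    div_self (normalizer_pos (by omega)).ne']

variable {E : Type*} [AddCommGroup E] [Module ℝ E]

theorem normalizer_smul_eq_add {p m : ℕ → E} {t : ℕ} (ht : 1 ≤ t)
    (hm : m t = (((t : ℝ) - 3) / ((t : ℝ) + 1)) • m (t - 1) + ((4 : ℝ) / ((t : ℝ) + 1)) • p t) :
    normalizer t • m t = normalizer (t - 1) • m (t - 1) + weight t • p t := by
  rw [hm, smul_add, smul_smul, smul_smul, normalizer_mul_div ht, normalizer_mul_four_div]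

theorem eq_smul_add_sum_smul {p m : ℕ → E}
    (hm : ∀ t : ℕ, 5 ≤ t →
      m t = (((t : ℝ) - 3) / ((t : ℝ) + 1)) • m (t - 1) + ((4 : ℝ) / ((t : ℝ) + 1)) • p t)
    {t : ℕ} (ht : 5 ≤ t) :
    m t = (120 / normalizer t) • m 4 + ∑ k ∈ Icc 5 t, (weight k / normalizer t) • p k := by
  have telescoped : normalizer t • m t = (120 : ℝ) • m 4 + ∑ k ∈ Icc 5 t, weight k • p k := by
    rw [← normalizer_four]
    exact eq_add_sum_Icc_of_forall_eq_add (f := fun s => normalizer s • m s)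
      (g := fun k => weight k • p k) (n := 4)
      (fun s hs => normalizer_smul_eq_add (by omega) (hm s hs)) t (by omega)
  have hD : normalizer t ≠ 0 := (normalizer_pos (by omega)).ne'
  calc m t = (normalizer t)⁻¹ • (normalizer t • m t) := (inv_smul_smul₀ hD _).symm
    _ = _ := by simp only [telescoped, smul_add, smul_sum, smul_smul, inv_mul_eq_div]

end ImmediateMemory

/-- Closed-form solution of the immediate memory recursion: for every `t ≥ 5`,
`m t = (120 / ((t−2)(t−1)t(t+1))) • m 4
      + ∑_{k=5}^{t} (4(k−2)(k−1)k / ((t−2)(t−1)t(t+1))) • p k`,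
where all coefficients are nonnegative, sum to `1`, and are monotone in `k`
(more recent predictions receive larger weight). -/
theorem immediate_memory_closed_form
    {E : Type*} [AddCommGroup E] [Module ℝ E] (p m : ℕ → E)
    (hm : ∀ t : ℕ, 5 ≤ t →
      m t = (((t : ℝ) - 3) / ((t : ℝ) + 1)) • m (t - 1)
        + ((4 : ℝ) / ((t : ℝ) + 1)) • p t) :
    ∀ t : ℕ, 5 ≤ t →
      m t = ((120 : ℝ)
              / (((t : ℝ) - 2) * ((t : ℝ) - 1) * (t : ℝ) * ((t : ℝ) + 1))) • m 4
          + ∑ k ∈ Finset.Icc 5 t,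
              ((4 * ((k : ℝ) - 2) * ((k : ℝ) - 1) * (k : ℝ))
                / (((t : ℝ) - 2) * ((t : ℝ) - 1) * (t : ℝ) * ((t : ℝ) + 1))) • p k
      ∧ 0 ≤ (120 : ℝ) / (((t : ℝ) - 2) * ((t : ℝ) - 1) * (t : ℝ) * ((t : ℝ) + 1))
      ∧ (∀ k ∈ Finset.Icc 5 t,
          0 ≤ (4 * ((k : ℝ) - 2) * ((k : ℝ) - 1) * (k : ℝ))
                / (((t : ℝ) - 2) * ((t : ℝ) - 1) * (t : ℝ) * ((t : ℝ) + 1)))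
      ∧ (120 : ℝ) / (((t : ℝ) - 2) * ((t : ℝ) - 1) * (t : ℝ) * ((t : ℝ) + 1))
          + ∑ k ∈ Finset.Icc 5 t,
              (4 * ((k : ℝ) - 2) * ((k : ℝ) - 1) * (k : ℝ))
                / (((t : ℝ) - 2) * ((t : ℝ) - 1) * (t : ℝ) * ((t : ℝ) + 1)) = 1
      ∧ (∀ k ∈ Finset.Icc 5 t, ∀ k' ∈ Finset.Icc 5 t, k ≤ k' →
          (4 * ((k : ℝ) - 2) * ((k : ℝ) - 1) * (k : ℝ))
              / (((t : ℝ) - 2) * ((t : ℝ) - 1) * (t : ℝ) * ((t : ℝ) + 1))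
            ≤ (4 * ((k' : ℝ) - 2) * ((k' : ℝ) - 1) * (k' : ℝ))
              / (((t : ℝ) - 2) * ((t : ℝ) - 1) * (t : ℝ) * ((t : ℝ) + 1))) := by
  intro t ht
  have hD : 0 < ImmediateMemory.normalizer t := ImmediateMemory.normalizer_pos (by omega)
  exact ⟨ImmediateMemory.eq_smul_add_sum_smul hm ht, div_nonneg (by norm_num) hD.le,
    fun k _ => div_nonneg (ImmediateMemory.weight_nonneg k) hD.le,
    ImmediateMemory.div_normalizer_add_sum_weight_div (by omega),
    fun k _ k' _ hkk' => div_le_div_of_nonneg_right (ImmediateMemory.monotone_weight hkk') hD.le⟩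
end
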